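/- arXiv:2301.01870 — 5 statements merged into one kernel-verified Lean document; each statement's English description precedes it below -/
import Mathlib

section
/- Let f(θ) = min{κ₀θ², κ₀(θ-θ_p)² + f₀} with κ₀, μ, θ_p > 0, f₀ > 0, and let Φ(θ) = f(θ) + ((d-1)/d)·μ·θ² for an integer d ≥ 2. If θ₁ = (1/2)·(f₀/(κ₀θ_p) + (d-1)μθ_p/(dκ₀ + (d-1)μ)) and θ₂ = θ_p + (1/2)·(f₀/(κ₀θ_p) - (d-1)μθ_p/(dκ₀ + (d-1)μ)) satisfy θ₁ < θ₂, then Φ'(θ₁) = Φ'(θ₂) and Φ(θ₂) - Φ(θ₁) = Φ'(θ₁)·(θ₂ - θ₁). -/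
/-! The potential `Φ` is the minimum of two quadratics with the same leading coefficient
`κ₀ + c`, where `c = (d-1)/d · μ`. Their difference is affine and changes sign at
`θₛ = (θp + f₀/(κ₀θp))/2`; since `θ₁ + θ₂ = 2θₛ`, the hypothesis `θ₁ < θ₂` puts `θ₁` strictly on
the left branch and `θ₂` strictly on the right one, where `Φ` is smooth. The two tangency
conditions are then polynomial identities in the branch formulas. -/

theorem HasDerivAt.min_of_lt {f g : ℝ → ℝ} {f' x : ℝ} (hf : HasDerivAt f f' x)
    (hg : ContinuousAt g x) (hlt : f x < g x) :
    HasDerivAt (fun y => min (f y) (g y)) f' x :=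
  hf.congr_of_eventuallyEq <| by
    filter_upwards [hf.continuousAt.eventually_lt hg hlt] with y hy
    exact min_eq_left hy.le

theorem HasDerivAt.min_of_gt {f g : ℝ → ℝ} {g' x : ℝ} (hg : HasDerivAt g g' x)
    (hf : ContinuousAt f x) (hlt : g x < f x) :
    HasDerivAt (fun y => min (f y) (g y)) g' x := by
  simpa only [min_comm] using hg.min_of_lt hf hlt

section BiQuadratic

variable {κ₀ θp f₀ c θ : ℝ}

theorem shifted_sq_add_sub_sq (hκθ : κ₀ * θp ≠ 0) :
    κ₀ * (θ - θp) ^ 2 + f₀ - κ₀ * θ ^ 2 = κ₀ * θp * (θp + f₀ / (κ₀ * θp) - 2 * θ) := by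
  rw [mul_sub, mul_add, mul_div_cancel₀ _ hκθ]
  ring

theorem sq_lt_shifted_sq_add (hκθ : 0 < κ₀ * θp) (hθ : 2 * θ < θp + f₀ / (κ₀ * θp)) :
    κ₀ * θ ^ 2 < κ₀ * (θ - θp) ^ 2 + f₀ := by
  have := shifted_sq_add_sub_sq (f₀ := f₀) (θ := θ) hκθ.ne'
  linarith [mul_pos hκθ (sub_pos.2 hθ)]

theorem shifted_sq_add_lt_sq (hκθ : 0 < κ₀ * θp) (hθ : θp + f₀ / (κ₀ * θp) < 2 * θ) :
    κ₀ * (θ - θp) ^ 2 + f₀ < κ₀ * θ ^ 2 := by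
  have := shifted_sq_add_sub_sq (f₀ := f₀) (θ := θ) hκθ.ne'
  linarith [mul_pos hκθ (sub_pos.2 hθ)]

theorem hasDerivAt_biQuadratic_of_lt (hθ : κ₀ * θ ^ 2 < κ₀ * (θ - θp) ^ 2 + f₀) :
    HasDerivAt (fun θ => min (κ₀ * θ ^ 2) (κ₀ * (θ - θp) ^ 2 + f₀) + c * θ ^ 2)
      (2 * (κ₀ + c) * θ) θ := by
  have hmin := ((hasDerivAt_pow 2 θ).const_mul κ₀).min_of_lt
    (g := fun θ => κ₀ * (θ - θp) ^ 2 + f₀) (by fun_prop) hθ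
  exact (hmin.add ((hasDerivAt_pow 2 θ).const_mul c)).congr_deriv (by push_cast; ring)

theorem hasDerivAt_biQuadratic_of_gt (hθ : κ₀ * (θ - θp) ^ 2 + f₀ < κ₀ * θ ^ 2) :
    HasDerivAt (fun θ => min (κ₀ * θ ^ 2) (κ₀ * (θ - θp) ^ 2 + f₀) + c * θ ^ 2)
      (2 * κ₀ * (θ - θp) + 2 * c * θ) θ := by
  have hright : HasDerivAt (fun θ => κ₀ * (θ - θp) ^ 2 + f₀) (κ₀ * (2 * (θ - θp))) θ := by
    simpa using (((hasDerivAt_id θ).sub_const θp).pow 2).const_mul κ₀ |>.add_const f₀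
  have hmin := hright.min_of_gt (f := fun θ => κ₀ * θ ^ 2) (by fun_prop) hθ
  exact (hmin.add ((hasDerivAt_pow 2 θ).const_mul c)).congr_deriv (by push_cast; ring)

theorem common_tangent_identities {θ₁ θ₂ : ℝ} (hκ : κ₀ ≠ 0) (hθp : θp ≠ 0) (hA : κ₀ + c ≠ 0)
    (hθ₁ : θ₁ = 1 / 2 * (f₀ / (κ₀ * θp) + c * θp / (κ₀ + c)))
    (hθ₂ : θ₂ = θp + 1 / 2 * (f₀ / (κ₀ * θp) - c * θp / (κ₀ + c))) :
    2 * (κ₀ + c) * θ₁ = 2 * κ₀ * (θ₂ - θp) + 2 * c * θ₂ ∧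
      κ₀ * (θ₂ - θp) ^ 2 + f₀ + c * θ₂ ^ 2 - (κ₀ * θ₁ ^ 2 + c * θ₁ ^ 2)
        = 2 * (κ₀ + c) * θ₁ * (θ₂ - θ₁) := by
  subst hθ₁ hθ₂
  constructor <;> field_simp <;> ring

end BiQuadratic

theorem stmt2_general (d : ℕ) (hd : 2 ≤ d) (κ₀ μ θp f₀ : ℝ)
    (hκ : 0 < κ₀) (hμ : 0 < μ) (hθp : 0 < θp)
    (f : ℝ → ℝ) (hf : ∀ θ, f θ = min (κ₀*θ^2) (κ₀*(θ-θp)^2 + f₀))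
    (Φ : ℝ → ℝ) (hΦ : ∀ θ, Φ θ = f θ + (((d:ℝ)-1)/d)*μ*θ^2)
    (θ₁ θ₂ : ℝ)
    (hθ₁ : θ₁ = (1/2)*(f₀/(κ₀*θp) + ((d:ℝ)-1)*μ*θp/(d*κ₀ + ((d:ℝ)-1)*μ)))
    (hθ₂ : θ₂ = θp + (1/2)*(f₀/(κ₀*θp) - ((d:ℝ)-1)*μ*θp/(d*κ₀ + ((d:ℝ)-1)*μ)))
    (hlt : θ₁ < θ₂) :
    deriv Φ θ₁ = deriv Φ θ₂ ∧ Φ θ₂ - Φ θ₁ = deriv Φ θ₁ * (θ₂ - θ₁) := by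
  set c : ℝ := ((d:ℝ)-1)/d*μ with hc
  have hd1 : (1:ℝ) ≤ d := by exact_mod_cast one_le_two.trans hd
  have hA : 0 < κ₀ + c := by positivity
  have hshift : ((d:ℝ)-1)*μ*θp/(d*κ₀ + ((d:ℝ)-1)*μ) = c * θp / (κ₀ + c) := by
    rw [hc]; field_simp
  rw [hshift] at hθ₁ hθ₂
  have hκθ : 0 < κ₀ * θp := mul_pos hκ hθp
  have hsum : θ₁ + θ₂ = θp + f₀/(κ₀*θp) := by rw [hθ₁, hθ₂]; ring
  have h₁ : κ₀ * θ₁ ^ 2 < κ₀ * (θ₁ - θp) ^ 2 + f₀ := sq_lt_shifted_sq_add hκθ (by linarith)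
  have h₂ : κ₀ * (θ₂ - θp) ^ 2 + f₀ < κ₀ * θ₂ ^ 2 := shifted_sq_add_lt_sq hκθ (by linarith)
  have hΦ' : Φ = fun θ => min (κ₀*θ^2) (κ₀*(θ-θp)^2 + f₀) + c*θ^2 := by
    funext θ; rw [hΦ, hf]
  subst hΦ'
  rw [(hasDerivAt_biQuadratic_of_lt h₁).deriv, (hasDerivAt_biQuadratic_of_gt h₂).deriv]
  dsimp only
  rw [min_eq_left h₁.le, min_eq_right h₂.le]
  exact common_tangent_identities hκ.ne' hθp.ne' hA.ne' hθ₁ hθ₂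

/-- common tangent conditions for the bi-quadratic potential. -/
theorem stmt2 (d : ℕ) (hd : 2 ≤ d) (κ₀ μ θp f₀ : ℝ)
    (hκ : 0 < κ₀) (hμ : 0 < μ) (hθp : 0 < θp) (hf₀ : 0 < f₀)
    (f : ℝ → ℝ) (hf : ∀ θ, f θ = min (κ₀*θ^2) (κ₀*(θ-θp)^2 + f₀))
    (Φ : ℝ → ℝ) (hΦ : ∀ θ, Φ θ = f θ + (((d:ℝ)-1)/d)*μ*θ^2)
    (θ₁ θ₂ : ℝ)
    (hθ₁ : θ₁ = (1/2)*(f₀/(κ₀*θp) + ((d:ℝ)-1)*μ*θp/(d*κ₀ + ((d:ℝ)-1)*μ)))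
    (hθ₂ : θ₂ = θp + (1/2)*(f₀/(κ₀*θp) - ((d:ℝ)-1)*μ*θp/(d*κ₀ + ((d:ℝ)-1)*μ)))
    (hlt : θ₁ < θ₂) :
    deriv Φ θ₁ = deriv Φ θ₂ ∧ Φ θ₂ - Φ θ₁ = deriv Φ θ₁ * (θ₂ - θ₁) :=
  stmt2_general d hd κ₀ μ θp f₀ hκ hμ hθp f hf Φ hΦ θ₁ θ₂ hθ₁ hθ₂ hlt
end

section
/- Let W : 𝕄 → ℝ be C¹, P = W_H, and let H₊, H₋ ∈ 𝕄 satisfy the jump set equations: H₊ − H₋ = a⊗n, (P(H₊)−P(H₋))n = 0, (P(H₊)−P(H₋))ᵀa = 0, and W(H₊)−W(H₋) = ⟨(P(H₊)+P(H₋))/2, H₊−H₋⟩. Suppose (i) W(H) ≥ W(H₋) + ⟨P(H₋), H−H₋⟩ for all H with rank(H−H₋) = 1, and (ii) for each t ∈ (0,1), if H_t = tH₊ + (1−t)H₋ also satisfies the rank-one tangency inequality W(H) ≥ W(H_t) + ⟨P(H_t), H−H_t⟩ for all H with rank(H−H_t)=1, then ⟨P(H_t)−P(H₋), H_t−H_₋⟩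 > 0. Then, assuming the phase-interchange inequality ⟨P(H_t)−P(H₋), H_t−H₋⟩ ≤ 0 would follow from the tangency inequality at H_t (as established in the cited lemma), every H_t, t ∈ (0,1), fails the rank-one tangency inequality; in particular, the chain of inequalities W(H₋) + t⟨P(H₋),a⊗n⟩ ≤ W(H_t) ≤ W(H₊) − (1−t)⟨P(H_t),a⊗n⟩ together with the jump set equations implies ⟨P(H_t)−P(H₋), H_t−H₋⟩ ≤ 0. -/
noncomputable section

def basisM {d m : ℕ} (i : Fin m) (j : Fin d) : Fin m → Fin d → ℝ :=
  fun i' j' => if i' = i ∧ j' = j then 1 else 0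

/-- entries of P(H) = W_H(H) -/
def Pm {d : ℕ} (W : (Fin d → Fin d → ℝ) → ℝ) (H : Fin d → Fin d → ℝ) :
    Fin d → Fin d → ℝ :=
  fun i j => fderiv ℝ W H (basisM i j)

/-- the jump set equations together with the rank-one tangency
inequalities at H₋ and at H_t force the phase-interchange inequality
`⟨P(H_t) − P(H₋), H_t − H₋⟩ ≤ 0`. -/
theorem stmt11 (d : ℕ) (W : (Fin d → Fin d → ℝ) → ℝ) (hW : ContDiff ℝ 1 W)
    (Hp Hm : Fin d → Fin d → ℝ) (a nv : Fin d → ℝ) (hn : ∑ j, nv j ^ 2 = 1)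
    (hjump1 : ∀ i j, Hp i j - Hm i j = a i * nv j)
    (hjump2 : ∀ i, ∑ j, (Pm W Hp i j - Pm W Hm i j) * nv j = 0)
    (hjump3 : ∀ j, ∑ i, (Pm W Hp i j - Pm W Hm i j) * a i = 0)
    (hjump4 : W Hp - W Hm =
      ∑ i, ∑ j, ((Pm W Hp i j + Pm W Hm i j)/2) * (Hp i j - Hm i j))
    (htanm : ∀ H : Fin d → Fin d → ℝ,
      (∃ (b mv : Fin d → ℝ), ∀ i j, H i j - Hm i j = b i * mv j) →
      W H ≥ W Hm + ∑ i, ∑ j, Pm W Hm i j * (H i j - Hm i j))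
    (t : ℝ) (ht : t ∈ Set.Ioo (0:ℝ) 1)
    (Ht : Fin d → Fin d → ℝ) (hHt : Ht = fun i j => t * Hp i j + (1-t) * Hm i j)
    (htant : ∀ H : Fin d → Fin d → ℝ,
      (∃ (b mv : Fin d → ℝ), ∀ i j, H i j - Ht i j = b i * mv j) →
      W H ≥ W Ht + ∑ i, ∑ j, Pm W Ht i j * (H i j - Ht i j)) :
    ∑ i, ∑ j, (Pm W Ht i j - Pm W Hm i j) * (Ht i j - Hm i j) ≤ 0 := by
  obtain ⟨ht0, ht1⟩ := ht
  set A := ∑ i, ∑ j, Pm W Hm i j * (a i * nv j) with hA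
  set B := ∑ i, ∑ j, Pm W Ht i j * (a i * nv j) with hB
  set C := ∑ i, ∑ j, Pm W Hp i j * (a i * nv j) with hC
  have hHtm : ∀ i j, Ht i j - Hm i j = t * (a i * nv j) := by
    intro i j; rw [hHt]; have := hjump1 i j; simp only; nlinarith
  have hpHt : ∀ i j, Hp i j - Ht i j = (1 - t) * (a i * nv j) := by
    intro i j; rw [hHt]; have := hjump1 i j; simp only; nlinarith
  have hCA : C = A := by
    have h : ∑ i, a i * (∑ j, (Pm W Hp i j - Pm W Hm i j) * nv j) = 0 := by
      simp [hjump2]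
    rw [hA, hC, ← sub_eq_zero, ← Finset.sum_sub_distrib, ← h]
    apply Finset.sum_congr rfl; intro i _
    rw [Finset.mul_sum, ← Finset.sum_sub_distrib]
    apply Finset.sum_congr rfl; intro j _; ring
  have h4 : W Hp - W Hm = A := by
    have : W Hp - W Hm = (C + A) / 2 := by
      rw [hjump4, hA, hC, ← Finset.sum_add_distrib, Finset.sum_div]
      apply Finset.sum_congr rfl; intro i _
      rw [← Finset.sum_add_distrib, Finset.sum_div]
      apply Finset.sum_congr rfl; intro j _
      rw [hjump1 i j]; ring
    rw [this, hCA]; ring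
  have h1 : W Ht ≥ W Hm + t * A := by
    have := htanm Ht ⟨fun i => t * a i, nv, fun i j => by rw [hHtm i j]; ring⟩
    have hs : ∑ i, ∑ j, Pm W Hm i j * (Ht i j - Hm i j) = t * A := by
      rw [hA, Finset.mul_sum]
      apply Finset.sum_congr rfl; intro i _
      rw [Finset.mul_sum]
      apply Finset.sum_congr rfl; intro j _
      rw [hHtm i j]; ring
    linarith [this, hs.le, hs.ge]
  have h2 : W Hp ≥ W Ht + (1 - t) * B := by
    have := htant Hp ⟨fun i => (1 - t) * a i, nv, fun i j => by rw [hpHt i j]; ring⟩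
    have hs : ∑ i, ∑ j, Pm W Ht i j * (Hp i j - Ht i j) = (1 - t) * B := by
      rw [hB, Finset.mul_sum]
      apply Finset.sum_congr rfl; intro i _
      rw [Finset.mul_sum]
      apply Finset.sum_congr rfl; intro j _
      rw [hpHt i j]; ring
    linarith [this, hs.le, hs.ge]
  have hgoal : ∑ i, ∑ j, (Pm W Ht i j - Pm W Hm i j) * (Ht i j - Hm i j)
      = t * (B - A) := by
    rw [hA, hB, ← Finset.sum_sub_distrib, Finset.mul_sum]
    apply Finset.sum_congr rfl; intro i _
    rw [← Finset.sum_sub_distrib, Finset.mul_sum]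
    apply Finset.sum_congr rfl; intro j _
    rw [hHtm i j]; ring
  rw [hgoal]
  nlinarith
end
end

section
/- Let F : ℝ → ℝ be C², μ > 0, d ≥ 2, and define R(H) = F(tr H) + μ|dev(sym H)|², where sym H = (H+Hᵀ)/2 and dev(ε) = ε − (1/d)(tr ε)I. Then for any unit vector n ∈ ℝ^d and any a ∈ ℝ^d, the second directional derivative of R at H along a⊗n equals F''(tr H)(a·n)² + 2μ|sym(a⊗n) − (1/d)(a·n)I|², and the associated acoustic tensor is A(n) = (F''(tr H) + ((d−2)/d)μ) n⊗n + μI, whose determinant is μ^{d−1}·(F''(tr H) + 2(d−1)μ/d). -/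
/-!
Along the line `t ↦ H + t a⊗n` both `tr` and `dev (sym ·)` are affine in `t`, so `R` restricted
to the line is `F` of an affine function plus a quadratic polynomial whose leading coefficient is
`μ |dev sym (a⊗n)|²`; the second derivative at `0` is read off from this. The acoustic tensor is a
scalar matrix plus a rank-one matrix, and its determinant is the characteristic polynomial
`X ^ d - (u ⬝ᵥ v) X ^ (d - 1)` of the rank-one matrix `vecMulVec u v`, evaluated at `μ`.
-/

noncomputable section

def tr {d : ℕ} (M : Fin d → Fin d → ℝ) : ℝ := ∑ i, M i i
def frobSq {d : ℕ} (M : Fin d → Fin d → ℝ) : ℝ := ∑ i, ∑ j, (M i j)^2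
def symPart {d : ℕ} (M : Fin d → Fin d → ℝ) : Fin d → Fin d → ℝ := fun i j => (M i j + M j i)/2

open Finset Matrix

theorem Matrix.det_scalar_add_vecMulVec {n R : Type*} [Fintype n] [DecidableEq n] [CommRing R]
    [Nonempty n] (μ : R) (u v : n → R) :
    (scalar n μ + vecMulVec u v).det = μ ^ (Fintype.card n - 1) * (μ + v ⬝ᵥ u) := by
  obtain ⟨k, hk⟩ := Nat.exists_eq_add_one_of_ne_zero (Fintype.card_ne_zero (α := n))
  have h := eval_charpoly (vecMulVec (-u) v) μ
  rw [charpoly_vecMulVec, neg_vecMulVec, sub_neg_eq_add, hk] at h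
  rw [← h, hk]
  simp only [pow_succ, neg_dotProduct, dotProduct_comm u, add_tsub_cancel_right, neg_smul,
    sub_neg_eq_add, Polynomial.eval_add, Polynomial.eval_mul, Polynomial.eval_pow,
    Polynomial.eval_X, Polynomial.eval_smul, smul_eq_mul]
  ring

section Calculus

variable {𝕜 : Type*} [NontriviallyNormedField 𝕜]

theorem iteratedDeriv_comp_const_add_mul {E : Type*} [NormedAddCommGroup E] [NormedSpace 𝕜 E]
    {f : 𝕜 → E} {n : ℕ} (hf : ContDiff 𝕜 n f) (x c : 𝕜) :
    iteratedDeriv n (fun t => f (x + c * t)) = fun t => c ^ n • iteratedDeriv n f (x + c * t) := by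
  rw [iteratedDeriv_comp_const_smul (f := fun s => f (x + s))
    (hf.comp (contDiff_const.add contDiff_id)) c, iteratedDeriv_comp_const_add]

theorem iteratedDeriv_two_quadratic (p q r t : 𝕜) :
    iteratedDeriv 2 (fun t => p + q * t + r * t ^ 2) t = 2 * r := by
  have h : deriv (fun t => p + q * t + r * t ^ 2) = fun t => q + 2 * r * t := by
    funext t
    refine (((hasDerivAt_id t).const_mul q).const_add p |>.add
      ((hasDerivAt_pow 2 t).const_mul r)).deriv.trans ?_
    simp only [mul_one, Nat.cast_ofNat, Nat.add_one_sub_one, pow_one]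
    ring
  rw [iteratedDeriv_succ, iteratedDeriv_one, h]
  exact (((hasDerivAt_id t).const_mul (2 * r)).const_add q).deriv.trans (by simp)

theorem iteratedDeriv_two_comp_affine_add_quadratic {f : 𝕜 → 𝕜} (hf : ContDiff 𝕜 2 f)
    (x c p q r : 𝕜) :
    iteratedDeriv 2 (fun t => f (x + c * t) + (p + q * t + r * t ^ 2)) 0
      = deriv (deriv f) x * c ^ 2 + 2 * r := by
  rw [iteratedDeriv_fun_add (by fun_prop) (by fun_prop), iteratedDeriv_comp_const_add_mul hf,
    iteratedDeriv_two_quadratic, iteratedDeriv_succ, iteratedDeriv_one]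
  simp only [mul_zero, add_zero, smul_eq_mul, mul_comm]

end Calculus

section Tensors

variable {d : ℕ}

theorem tr_add_smul_outer (H : Fin d → Fin d → ℝ) (a n : Fin d → ℝ) (t : ℝ) :
    tr (fun i j => H i j + t * a i * n j) = tr H + (∑ i, a i * n i) * t := by
  simp only [tr, sum_add_distrib, sum_mul]
  congr 1
  exact sum_congr rfl fun i _ => by ring

theorem frobSq_add_smul (P Q : Fin d → Fin d → ℝ) (t : ℝ) :
    frobSq (fun i j => P i j + t * Q i j)
      = frobSq P + (2 * ∑ i, ∑ j, P i j * Q i j) * t + frobSq Q * t ^ 2 := by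
  simp only [frobSq, mul_sum, sum_mul, ← sum_add_distrib]
  exact sum_congr rfl fun i _ => sum_congr rfl fun j _ => by ring

theorem exists_frobSq_dev_symPart_add_smul_outer (H : Fin d → Fin d → ℝ) (a n : Fin d → ℝ) :
    ∃ α β : ℝ, ∀ t : ℝ,
      frobSq (fun i j => symPart (fun i j => H i j + t * a i * n j) i j
          - (tr (fun i j => H i j + t * a i * n j) / d) * (if i = j then (1 : ℝ) else 0))
        = α + β * t + frobSq (fun i j => (a i * n j + a j * n i) / 2
            - (1 / (d : ℝ)) * (∑ k, a k * n k) * (if i = j then (1 : ℝ) else 0)) * t ^ 2 := by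
  set P : Fin d → Fin d → ℝ := fun i j => symPart H i j - tr H / d * (if i = j then 1 else 0)
  set Q : Fin d → Fin d → ℝ := fun i j => (a i * n j + a j * n i) / 2
    - (1 / (d : ℝ)) * (∑ k, a k * n k) * (if i = j then 1 else 0)
  refine ⟨frobSq P, 2 * ∑ i, ∑ j, P i j * Q i j, fun t => ?_⟩
  rw [← frobSq_add_smul, tr_add_smul_outer]
  congr 1
  funext i j
  simp only [P, Q, symPart]
  ring

theorem frobSq_dev_symPart_outer (a n : Fin d → ℝ) :
    frobSq (fun i j => (a i * n j + a j * n i) / 2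
        - (1 / (d : ℝ)) * (∑ k, a k * n k) * (if i = j then (1 : ℝ) else 0))
      = ((∑ i, a i ^ 2) * (∑ i, n i ^ 2) + (∑ i, a i * n i) ^ 2) / 2
        - (∑ i, a i * n i) ^ 2 / d := by
  rcases eq_or_ne d 0 with rfl | hd
  · simp [frobSq]
  set c := ∑ k, a k * n k with hc
  have hsq : ∀ i j, ((a i * n j + a j * n i) / 2 - 1 / (d : ℝ) * c * (if i = j then 1 else 0)) ^ 2
      = (a i ^ 2 * n j ^ 2 + a j ^ 2 * n i ^ 2 + 2 * (a i * n i) * (a j * n j)) / 4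
        + if i = j then c ^ 2 / d ^ 2 - 2 * c / d * (a i * n i) else 0 := by
    intro i j
    split_ifs with h
    · subst h; ring
    · ring
  simp only [frobSq, hsq, sum_add_distrib, sum_ite_eq, mem_univ, if_true, ← sum_div]
  simp only [← mul_sum, ← sum_mul, sum_sub_distrib, sum_const, card_univ, Fintype.card_fin,
    nsmul_eq_mul, ← hc]
  field_simp
  ring

theorem quadForm_smul_outer_add_smul_one (κ μ : ℝ) (a n : Fin d → ℝ) :
    ∑ i, ∑ j, (κ * n i * n j + μ * (if i = j then (1 : ℝ) else 0)) * a i * a j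
      = κ * (∑ i, a i * n i) ^ 2 + μ * ∑ i, a i ^ 2 := by
  simp only [add_mul, sum_add_distrib, mul_ite, ite_mul, mul_zero, zero_mul, sum_ite_eq,
    mem_univ, if_true, sq, mul_sum, sum_mul]
  congr 1
  · exact sum_congr rfl fun i _ => sum_congr rfl fun j _ => by ring
  · exact sum_congr rfl fun i _ => by ring

theorem det_smul_outer_add_smul_one [NeZero d] (κ μ : ℝ) (n : Fin d → ℝ) :
    (Matrix.of fun i j => κ * n i * n j + μ * (if i = j then (1 : ℝ) else 0)).det
      = μ ^ (d - 1) * (μ + κ * ∑ i, n i ^ 2) := by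
  have h : (Matrix.of fun i j => κ * n i * n j + μ * (if i = j then (1 : ℝ) else 0))
      = scalar (Fin d) μ + vecMulVec (κ • n) n := by
    ext i j
    simp only [of_apply, Matrix.add_apply, scalar_apply, diagonal_apply, vecMulVec_apply,
      Pi.smul_apply, smul_eq_mul]
    split_ifs <;> ring
  rw [h, det_scalar_add_vecMulVec, Fintype.card_fin, dotProduct_smul, smul_eq_mul]
  simp only [dotProduct, sq]

end Tensors

theorem stmt14_general (d : ℕ) (μ : ℝ)
    (F : ℝ → ℝ) (hF : ContDiff ℝ 2 F)
    (R : (Fin d → Fin d → ℝ) → ℝ)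
    (hR : ∀ H, R H = F (tr H) +
      μ * frobSq (fun i j => symPart H i j - (tr H / d) * (if i = j then (1:ℝ) else 0)))
    (H : Fin d → Fin d → ℝ) (nv : Fin d → ℝ) (hn : ∑ i, nv i ^ 2 = 1)
    (a : Fin d → ℝ)
    (A : Fin d → Fin d → ℝ)
    (hA : ∀ i j, A i j = (deriv (deriv F) (tr H) + (((d:ℝ)-2)/d)*μ) * nv i * nv j
      + μ * (if i = j then (1:ℝ) else 0)) :
    (iteratedDeriv 2 (fun t : ℝ => R (fun i j => H i j + t * a i * nv j)) 0
      = deriv (deriv F) (tr H) * (∑ i, a i * nv i)^2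
        + 2*μ * frobSq (fun i j =>
            (a i * nv j + a j * nv i)/2 - (1/(d:ℝ))*(∑ k, a k * nv k) * (if i = j then (1:ℝ) else 0)))
    ∧ (∑ i, ∑ j, A i j * a i * a j
        = iteratedDeriv 2 (fun t : ℝ => R (fun i j => H i j + t * a i * nv j)) 0)
    ∧ (Matrix.of A).det = μ^(d-1) * (deriv (deriv F) (tr H) + 2*((d:ℝ)-1)*μ/d) := by
  have hd : d ≠ 0 := by rintro rfl; simp at hn
  have : NeZero d := ⟨hd⟩
  obtain rfl : A = _ := funext fun i => funext fun j => hA i j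
  obtain ⟨α, β, hdev⟩ := exists_frobSq_dev_symPart_add_smul_outer H a nv
  have hγ := frobSq_dev_symPart_outer a nv
  set γ := frobSq (fun i j => (a i * nv j + a j * nv i) / 2
    - (1 / (d : ℝ)) * (∑ k, a k * nv k) * (if i = j then (1 : ℝ) else 0))
  have hline : (fun t : ℝ => R (fun i j => H i j + t * a i * nv j))
      = fun t => F (tr H + (∑ i, a i * nv i) * t) + (μ * α + μ * β * t + μ * γ * t ^ 2) :=
    funext fun t => by rw [hR, hdev, tr_add_smul_outer]; ring
  have hsecond : iteratedDeriv 2 (fun t : ℝ => R (fun i j => H i j + t * a i * nv j)) 0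
      = deriv (deriv F) (tr H) * (∑ i, a i * nv i) ^ 2 + 2 * μ * γ := by
    rw [hline, iteratedDeriv_two_comp_affine_add_quadratic hF]
    ring
  refine ⟨hsecond, ?_, ?_⟩
  · rw [hsecond, quadForm_smul_outer_add_smul_one, hγ, hn]
    field_simp
    ring
  · rw [det_smul_outer_add_smul_one, hn]
    field_simp
    ring

/-- the second directional derivative along a⊗n of
`R(H) = F(tr H) + μ|dev sym H|²`, the associated acoustic tensor
`A(n) = (F''(tr H) + ((d−2)/d)μ) n⊗n + μI`, and its determinant. -/
theorem stmt14 (d : ℕ) (hd : 2 ≤ d) (μ : ℝ) (hμ : 0 < μ)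
    (F : ℝ → ℝ) (hF : ContDiff ℝ 2 F)
    (R : (Fin d → Fin d → ℝ) → ℝ)
    (hR : ∀ H, R H = F (tr H) +
      μ * frobSq (fun i j => symPart H i j - (tr H / d) * (if i = j then (1:ℝ) else 0)))
    (H : Fin d → Fin d → ℝ) (nv : Fin d → ℝ) (hn : ∑ i, nv i ^ 2 = 1)
    (a : Fin d → ℝ)
    (A : Fin d → Fin d → ℝ)
    (hA : ∀ i j, A i j = (deriv (deriv F) (tr H) + (((d:ℝ)-2)/d)*μ) * nv i * nv j
      + μ * (if i = j then (1:ℝ) else 0)) :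
    (iteratedDeriv 2 (fun t : ℝ => R (fun i j => H i j + t * a i * nv j)) 0
      = deriv (deriv F) (tr H) * (∑ i, a i * nv i)^2
        + 2*μ * frobSq (fun i j =>
            (a i * nv j + a j * nv i)/2 - (1/(d:ℝ))*(∑ k, a k * nv k) * (if i = j then (1:ℝ) else 0)))
    ∧ (∑ i, ∑ j, A i j * a i * a j
        = iteratedDeriv 2 (fun t : ℝ => R (fun i j => H i j + t * a i * nv j)) 0)
    ∧ (Matrix.of A).det = μ^(d-1) * (deriv (deriv F) (tr H) + 2*((d:ℝ)-1)*μ/d) :=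
  stmt14_general d μ F hF R hR H nv hn a A hA
end
end

section
/- Let Γ be a curve in ℂ parametrized by z(t) = a(t) + it, t ∈ [−1/√2, 1/√2], with a Lipschitz and z(−t) = conj(z(t)). Then for each integer k ≥ 0, the condition ∫_Γ z̄ z^{4k} dz = (−1)^k i ω/((4k+1)(2k+1)) is equivalent to Re{∫_0^{1/√2} (a(t)+it)^{4k+1} dt} = (−1)^k (ω+1)/(4(2k+1)), provided the endpoints satisfy z(±1/√2) = ±i/√2 + 1/√2 (so |z(±1/√2)| = 1). -/
/-!
Write `z = a + i t` and `r = 1/√2`. Since `Im z(t) = t`, we have `conj z = z - 2 i t`, and the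
integrand `conj z · zⁿ · z'` is `2i/(n+1) · z^(n+1)` plus the derivative of `Φ ∘ z`, where
`Φ(w) = w^(n+2)/(n+2) - 2i/(n+1) · Im w · w^(n+1)` is `conjPowPrimitive n`.
As `a` is Lipschitz, `Φ ∘ z` is absolutely continuous, so the fundamental theorem of calculus
applies to it. The endpoints `z(±r) = (1 ± i)/√2` square to `±i`, which evaluates the boundary
term for `n = 4k`, and the symmetry `z(-t) = conj z(t)` turns `∫_{-r}^{r} z^(4k+1)` into
`2 Re ∫_0^r z^(4k+1)`.
-/

open MeasureTheory Set Filter Complex ComplexConjugate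

theorem LocallyLipschitz.absolutelyContinuousOnInterval {X : Type*} [PseudoMetricSpace X]
    {f : ℝ → X} (hf : LocallyLipschitz f) (a b : ℝ) : AbsolutelyContinuousOnInterval f a b :=
  (hf.locallyLipschitzOn.exists_lipschitzOnWith_of_compact isCompact_uIcc).choose_spec
    |>.absolutelyContinuousOnInterval

theorem IntervalIntegrable.ofReal {f : ℝ → ℝ} {a b : ℝ} {μ : Measure ℝ}
    (hf : IntervalIntegrable f μ a b) : IntervalIntegrable (fun t => (f t : ℂ)) μ a b :=
  ⟨hf.1.ofReal, hf.2.ofReal⟩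

section LocallyLipschitz

variable {f : ℝ → ℂ}

theorem LocallyLipschitz.absolutelyContinuousOnInterval_re (hf : LocallyLipschitz f) (a b : ℝ) :
    AbsolutelyContinuousOnInterval (fun t => (f t).re) a b :=
  (reCLM.lipschitz.locallyLipschitz.comp hf).absolutelyContinuousOnInterval a b

theorem LocallyLipschitz.absolutelyContinuousOnInterval_im (hf : LocallyLipschitz f) (a b : ℝ) :
    AbsolutelyContinuousOnInterval (fun t => (f t).im) a b :=
  (imCLM.lipschitz.locallyLipschitz.comp hf).absolutelyContinuousOnInterval a b

theorem LocallyLipschitz.deriv_ae_eq_re_add_im (hf : LocallyLipschitz f) (a b : ℝ) :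
    deriv f =ᵐ[volume.restrict (uIoc a b)]
      fun t => ((deriv (fun s => (f s).re) t : ℝ) : ℂ) +
        ((deriv (fun s => (f s).im) t : ℝ) : ℂ) * I := by
  rw [EventuallyEq, ae_restrict_iff' measurableSet_uIoc]
  filter_upwards [(hf.absolutelyContinuousOnInterval_re a b).ae_differentiableAt,
    (hf.absolutelyContinuousOnInterval_im a b).ae_differentiableAt] with t hre him ht
  have hsplit : HasDerivAt (fun s => ((f s).re : ℂ) + ((f s).im : ℂ) * I)
      (deriv (fun s => (f s).re) t + deriv (fun s => (f s).im) t * I) t :=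
    (hre (uIoc_subset_uIcc ht)).hasDerivAt.ofReal_comp.add
      ((him (uIoc_subset_uIcc ht)).hasDerivAt.ofReal_comp.mul_const I)
  exact (hsplit.congr_of_eventuallyEq (.of_forall fun s => (re_add_im (f s)).symm)).deriv

theorem LocallyLipschitz.intervalIntegrable_deriv (hf : LocallyLipschitz f) (a b : ℝ) :
    IntervalIntegrable (deriv f) volume a b := by
  have hre := (hf.absolutelyContinuousOnInterval_re a b).intervalIntegrable_deriv
  have him := (hf.absolutelyContinuousOnInterval_im a b).intervalIntegrable_deriv
  exact (hre.ofReal.add (him.ofReal.mul_const I)).congr_ae (hf.deriv_ae_eq_re_add_im a b).symm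

theorem LocallyLipschitz.integral_deriv_eq_sub (hf : LocallyLipschitz f) (a b : ℝ) :
    ∫ t in a..b, deriv f t = f b - f a := by
  have hre := hf.absolutelyContinuousOnInterval_re a b
  have him := hf.absolutelyContinuousOnInterval_im a b
  rw [intervalIntegral.integral_congr_ae_restrict (hf.deriv_ae_eq_re_add_im a b),
    intervalIntegral.integral_add hre.intervalIntegrable_deriv.ofReal
      (him.intervalIntegrable_deriv.ofReal.mul_const I),
    intervalIntegral.integral_mul_const, intervalIntegral.integral_ofReal,
    intervalIntegral.integral_ofReal, hre.integral_deriv_eq_sub, him.integral_deriv_eq_sub]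
  conv_rhs => rw [← re_add_im (f b), ← re_add_im (f a)]
  push_cast
  ring

end LocallyLipschitz

noncomputable def conjPowPrimitive (n : ℕ) (w : ℂ) : ℂ :=
  w ^ (n + 2) / (n + 2) - 2 * I / (n + 1) * w.im * w ^ (n + 1)

theorem contDiff_conjPowPrimitive (n : ℕ) : ContDiff ℝ 1 (conjPowPrimitive n) := by
  unfold conjPowPrimitive
  have : ContDiff ℝ 1 fun w : ℂ => (w.im : ℂ) := ofRealCLM.contDiff.comp imCLM.contDiff
  fun_prop

section GraphCurve

variable {a : ℝ → ℝ} {z : ℝ → ℂ}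

theorem locallyLipschitz_of_graph {K : NNReal} (ha : LipschitzWith K a)
    (hz : ∀ t, z t = a t + t * I) : LocallyLipschitz z := by
  rw [funext hz]
  exact (isometry_ofReal.lipschitz.comp ha).locallyLipschitz.add
    (ofRealCLM.contDiff.mul contDiff_const :
      ContDiff ℝ 1 fun t : ℝ => (t : ℂ) * I).locallyLipschitz

theorem hasDerivAt_of_graph (hz : ∀ t, z t = a t + t * I) {t : ℝ}
    (ha : DifferentiableAt ℝ a t) : HasDerivAt z (deriv a t + I) t := by
  rw [funext hz]
  simpa using ha.hasDerivAt.ofReal_comp.fun_add ((hasDerivAt_id t).ofReal_comp.mul_const I)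

theorem conj_mul_pow_mul_eq_deriv (hz : ∀ t, z t = a t + t * I) {t : ℝ}
    (ha : DifferentiableAt ℝ a t) (n : ℕ) :
    conj (z t) * z t ^ n * (deriv a t + I) =
      deriv (conjPowPrimitive n ∘ z) t + 2 * I / (n + 1) * z t ^ (n + 1) := by
  have hz' := hasDerivAt_of_graph hz ha
  have him : HasDerivAt (fun s => ((z s).im : ℂ)) 1 t := by
    simpa [hz] using (hasDerivAt_id t).ofReal_comp
  have hP : HasDerivAt (conjPowPrimitive n ∘ z) _ t :=
    (((hz'.fun_pow (n + 2)).div_const ((n : ℂ) + 2)).fun_sub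
      ((him.fun_mul (hz'.fun_pow (n + 1))).const_mul (2 * I / ((n : ℂ) + 1))))
      |>.congr_of_eventuallyEq (.of_forall fun s => by
        simp only [Function.comp_apply, conjPowPrimitive, mul_assoc])
  rw [hP.deriv]
  have hconj : conj (z t) = z t - 2 * t * I := by
    rw [hz]; apply Complex.ext <;> simp; ring
  rw [hconj, show ((z t).im : ℂ) = t by simp [hz]]
  have hn1 : (n : ℂ) + 1 ≠ 0 := by norm_cast
  have hn2 : (n : ℂ) + 2 ≠ 0 := by norm_cast
  simp only [add_tsub_cancel_right, pow_succ]
  push_cast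
  field_simp
  ring

theorem integral_conj_mul_pow_mul_eq {K : NNReal} (ha : LipschitzWith K a)
    (hz : ∀ t, z t = a t + t * I) (n : ℕ) (α β : ℝ) :
    ∫ t in α..β, conj (z t) * z t ^ n * (deriv a t + I) =
      conjPowPrimitive n (z β) - conjPowPrimitive n (z α) +
        2 * I / (n + 1) * ∫ t in α..β, z t ^ (n + 1) := by
  have hP : LocallyLipschitz (conjPowPrimitive n ∘ z) :=
    (contDiff_conjPowPrimitive n).locallyLipschitz.comp (locallyLipschitz_of_graph ha hz)
  have hzc : Continuous z := (locallyLipschitz_of_graph ha hz).continuous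
  rw [intervalIntegral.integral_congr_ae (ha.ae_differentiableAt_real.mono
      fun t ht _ => conj_mul_pow_mul_eq_deriv hz ht n),
    intervalIntegral.integral_add (hP.intervalIntegrable_deriv α β)
      (((hzc.fun_pow (n + 1)).intervalIntegrable α β).const_mul (2 * I / (n + 1))),
    hP.integral_deriv_eq_sub, intervalIntegral.integral_const_mul]
  rfl

end GraphCurve

theorem intervalIntegral_neg_eq_two_mul_re {f : ℝ → ℂ} (hf : Continuous f)
    (hconj : ∀ t, f (-t) = conj (f t)) (r : ℝ) :
    ∫ t in -r..r, f t = 2 * ((∫ t in 0..r, f t).re : ℂ) := by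
  have hleft : ∫ t in -r..0, f t = conj (∫ t in 0..r, f t) := by
    rw [← intervalIntegral.intervalIntegral_conj]
    simpa [hconj] using (intervalIntegral.integral_comp_neg (a := 0) (b := r) f).symm
  rw [← intervalIntegral.integral_add_adjacent_intervals (hf.intervalIntegrable _ _)
    (hf.intervalIntegrable _ _), hleft, add_comm, add_conj]
  push_cast
  ring

theorem conjPowPrimitive_sub_conj {w : ℂ} (hw : w ^ 2 = I) (k : ℕ) :
    conjPowPrimitive (4 * k) w - conjPowPrimitive (4 * k) (conj w) =
      (-1) ^ k * I * (1 / (2 * k + 1) - 2 / (4 * k + 1)) := by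
  have hw4 : w ^ 4 = -1 := by rw [show w ^ 4 = (w ^ 2) ^ 2 by ring, hw, I_sq]
  have hw' : conj w ^ 2 = -I := by rw [← map_pow, hw, conj_I]
  have hw4' : conj w ^ 4 = -1 := by rw [← map_pow, hw4]; simp
  have hreim : 2 * (w.re : ℂ) * w.im = 1 := by
    have := congrArg im hw
    simp only [sq, mul_im, I_im] at this
    exact_mod_cast (by linarith : 2 * w.re * w.im = 1)
  have hconj : conj w = 2 * (w.re : ℂ) - w := by apply Complex.ext <;> simp; ring
  have h4k : (k : ℂ) * 4 + 1 ≠ 0 := by norm_cast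
  have h2k : (2 * k : ℂ) + 1 ≠ 0 := by norm_cast
  simp only [conjPowPrimitive, conj_im, pow_add, pow_mul, hw, hw', hw4, hw4', pow_one]
  rw [hconj]
  push_cast
  rw [show (4 * k : ℂ) + 2 = 2 * (2 * k + 1) by ring]
  field_simp
  linear_combination (-4 * (2 * k + 1) : ℂ) * hreim

theorem stmt17_general (ω : ℝ)
    (a : ℝ → ℝ) (K : NNReal) (ha : LipschitzWith K a)
    (hsym : ∀ t, a (-t) = a t) (hend : a (1/Real.sqrt 2) = 1/Real.sqrt 2)
    (z : ℝ → ℂ) (hz : ∀ t, z t = (a t : ℂ) + t * Complex.I) (k : ℕ) :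
    ((∫ t in (-(1/Real.sqrt 2))..(1/Real.sqrt 2),
        (starRingEnd ℂ) (z t) * (z t)^(4*k) * ((Complex.ofReal (deriv a t)) + Complex.I))
      = (-1:ℂ)^k * Complex.I * (ω:ℂ) / (((4*k+1 : ℕ) : ℂ) * ((2*k+1 : ℕ) : ℂ)))
    ↔ (∫ t in (0:ℝ)..(1/Real.sqrt 2), (z t)^(4*k+1)).re
        = (-1:ℝ)^k * (ω+1) / (4*((2*k+1 : ℕ) : ℝ)) := by
  set r : ℝ := 1 / Real.sqrt 2
  have hzneg : ∀ t, z (-t) = conj (z t) := fun t => by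
    apply Complex.ext <;> simp [hz, hsym]
  have hzr : z r ^ 2 = I := by
    have hr : (r : ℂ) ^ 2 = 1 / 2 := by norm_cast; simp [r]
    rw [hz, hend]
    linear_combination (2 * I) * hr + (r : ℂ) ^ 2 * I_sq
  have hzc : Continuous z := (locallyLipschitz_of_graph ha hz).continuous
  rw [integral_conj_mul_pow_mul_eq ha hz, hzneg, conjPowPrimitive_sub_conj hzr,
    intervalIntegral_neg_eq_two_mul_re (hzc.fun_pow _) (fun t => by rw [hzneg, map_pow]),
    ← ofReal_inj]
  have h4k : (k : ℂ) * 4 + 1 ≠ 0 := by norm_cast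
  have h2k : (2 * k : ℂ) + 1 ≠ 0 := by norm_cast
  have hboundary : (-1) ^ k * I * (1 / (2 * k + 1) - 2 / (4 * k + 1)) +
      2 * I / ((4 * k : ℕ) + 1) *
        (2 * (((-1:ℝ)^k * (ω+1) / (4*((2*k+1 : ℕ) : ℝ)) : ℝ) : ℂ)) =
      (-1:ℂ)^k * I * ω / (((4*k+1 : ℕ) : ℂ) * ((2*k+1 : ℕ) : ℂ)) := by
    push_cast
    field_simp
    ring
  rw [← hboundary, add_right_inj, mul_right_inj' (by simp; norm_cast),
    mul_right_inj' two_ne_zero]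

/-- equivalence of the moment conditions on the curve Γ via
integration by parts and the reflection symmetry z(−t) = conj(z(t)). -/
theorem stmt17 (ω : ℝ) (hω : ω ∈ Set.Ioo (0:ℝ) 1)
    (a : ℝ → ℝ) (K : NNReal) (ha : LipschitzWith K a)
    (hsym : ∀ t, a (-t) = a t) (hend : a (1/Real.sqrt 2) = 1/Real.sqrt 2)
    (z : ℝ → ℂ) (hz : ∀ t, z t = (a t : ℂ) + t * Complex.I) (k : ℕ) :
    ((∫ t in (-(1/Real.sqrt 2))..(1/Real.sqrt 2),
        (starRingEnd ℂ) (z t) * (z t)^(4*k) * ((Complex.ofReal (deriv a t)) + Complex.I))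
      = (-1:ℂ)^k * Complex.I * (ω:ℂ) / (((4*k+1 : ℕ) : ℂ) * ((2*k+1 : ℕ) : ℂ)))
    ↔ (∫ t in (0:ℝ)..(1/Real.sqrt 2), (z t)^(4*k+1)).re
        = (-1:ℝ)^k * (ω+1) / (4*((2*k+1 : ℕ) : ℝ)) :=
  stmt17_general ω a K ha hsym hend z hz k
end

section
/- Let d ≥ 2, μ > 0, and f : ℝ → ℝ continuous and bounded below. Define W₀(H) = f(tr H) + μ|sym H − (1/d)(tr H)I|² and Φ(θ) = f(θ) + ((d−1)/d)μθ². Then for every d×d matrix H, W₀(H) = Φ(tr H) + (μ/4)|H − Hᵀ|² − 2μJ₂(H), where 2J₂(H) = (tr H)² − tr(H²); consequently W₀(H) ≥ Φ**(tr H) + (μ/4)|H − Hᵀ|² − 2μJ₂(H) for all H, with equality if and only if Φ(tr H) = Φ**(tr H). -/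
noncomputable section

def trSq {d : ℕ} (M : Fin d → Fin d → ℝ) : ℝ := ∑ i, ∑ j, M i j * M j i
lemma L1 {d : ℕ} (H : Fin d → Fin d → ℝ) :
    frobSq (fun i j => H i j - H j i) = 2*frobSq H - 2*trSq H := by
  simp only [frobSq, trSq]
  have h1 : ∑ i, ∑ j, (H j i)^2 = ∑ i, ∑ j, (H i j)^2 := by rw [Finset.sum_comm]
  calc ∑ i, ∑ j, (H i j - H j i)^2
      = ∑ i, ∑ j, ((H i j)^2 + (H j i)^2 - 2*(H i j * H j i)) := by
        congr 1; ext i; congr 1; ext j; ring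
    _ = (∑ i, ∑ j, (H i j)^2) + (∑ i, ∑ j, (H j i)^2) - 2*∑ i, ∑ j, H i j * H j i := by
        simp [Finset.sum_add_distrib, Finset.sum_sub_distrib, Finset.mul_sum]
    _ = 2*(∑ i, ∑ j, (H i j)^2) - 2*∑ i, ∑ j, H i j * H j i := by rw [h1]; ring

lemma L2 {d : ℕ} (hd : (d:ℝ) ≠ 0) (H : Fin d → Fin d → ℝ) :
    frobSq (fun i j => symPart H i j - (tr H / d) * (if i = j then (1:ℝ) else 0))
      = (frobSq H + trSq H)/2 - (tr H)^2/d := by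
  have h1 : ∑ i : Fin d, ∑ j, (H j i)^2 = ∑ i, ∑ j, (H i j)^2 := by rw [Finset.sum_comm]
  simp only [frobSq, symPart, tr, trSq]
  set t := ∑ i, H i i with ht
  calc ∑ i, ∑ j, ((H i j + H j i)/2 - (t / d) * (if i = j then (1:ℝ) else 0))^2
      = ∑ i, ∑ j, (((H i j)^2 + (H j i)^2)/4 + (H i j * H j i)/2
          - (t/d) * (if i = j then 2*H i i else 0) + (t/d)^2 * (if i = j then (1:ℝ) else 0)) := by
        congr 1; ext i; congr 1; ext j
        by_cases h : i = j
        · subst h; simp; ring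
        · simp [h]; ring
    _ = ((∑ i, ∑ j, (H i j)^2) + (∑ i, ∑ j, (H j i)^2))/4 + (∑ i, ∑ j, H i j * H j i)/2
          - (t/d) * (2*t) + (t/d)^2 * d := by
        simp [Finset.sum_add_distrib, Finset.sum_sub_distrib, ← Finset.sum_div,
          Finset.mul_sum, Finset.sum_ite_eq, ht]
        ring
    _ = ((∑ i, ∑ j, (H i j)^2) + ∑ i, ∑ j, H i j * H j i)/2 - t^2/d := by
        rw [h1]; field_simp; ring

/-- pointwise decomposition of the geometrically linearized Hadamard
energy into a null-Lagrangian and a Φ-controlled part, the resulting lower bound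
with Φ**, and the equality case. -/
theorem stmt19 (d : ℕ) (hd : 2 ≤ d) (μ : ℝ) (hμ : 0 < μ)
    (f : ℝ → ℝ) (hf : Continuous f) (hbd : BddBelow (Set.range f))
    (W₀ : (Fin d → Fin d → ℝ) → ℝ)
    (hW₀ : ∀ H, W₀ H = f (tr H) +
      μ * frobSq (fun i j => symPart H i j - (tr H / d) * (if i = j then (1:ℝ) else 0)))
    (Φ Φc : ℝ → ℝ) (hΦ : ∀ θ, Φ θ = f θ + (((d:ℝ)-1)/d)*μ*θ^2)
    (hcvx : ConvexOn ℝ Set.univ Φc) (hle : ∀ θ, Φc θ ≤ Φ θ)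
    (hmax : ∀ g : ℝ → ℝ, ConvexOn ℝ Set.univ g → (∀ θ, g θ ≤ Φ θ) → ∀ θ, g θ ≤ Φc θ) :
    ∀ H : Fin d → Fin d → ℝ,
      (W₀ H = Φ (tr H) + (μ/4) * frobSq (fun i j => H i j - H j i)
        - μ * ((tr H)^2 - trSq H))
      ∧ (W₀ H ≥ Φc (tr H) + (μ/4) * frobSq (fun i j => H i j - H j i)
        - μ * ((tr H)^2 - trSq H))
      ∧ (W₀ H = Φc (tr H) + (μ/4) * frobSq (fun i j => H i j - H j i)
          - μ * ((tr H)^2 - trSq H) ↔ Φ (tr H) = Φc (tr H)) := by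
  intro H
  have hdne : (d:ℝ) ≠ 0 := Nat.cast_ne_zero.mpr (by omega)
  set t := tr H with ht
  have key : W₀ H = Φ t + (μ/4) * frobSq (fun i j => H i j - H j i) - μ * (t^2 - trSq H) := by
    rw [hW₀, L2 hdne, L1, hΦ]
    field_simp
    ring
  refine ⟨key, ?_, ?_⟩
  · rw [key]
    have := hle t
    linarith
  · rw [key]
    constructor
    · intro h; linarith
    · intro h; rw [h]
end
end
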